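/- For a nonempty closed convex set C in a real Hilbert space, fixed S ∈ H and λ > 0, the gradient of the function d(p) = −‖H_C(S − λ L p)‖² + ‖S − λ L p‖², where H_C(x) = x − P_C(x) and L is a bounded linear operator, is ∇d(p) = −2λ L* P_C(S − λ L p), and this gradient is Lipschitz continuous with Lipschitz constant at most 2λ²‖L‖². -/
import Mathlib

local notation "⟪" x ", " y "⟫" => @inner ℝ _ _ x y

set_option maxHeartbeats 1000000 in
theorem dual_objective_gradient_and_lipschitz
    {H H' : Type*} [NormedAddCommGroup H] [InnerProductSpace ℝ H] [CompleteSpace H]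
    [NormedAddCommGroup H'] [InnerProductSpace ℝ H'] [CompleteSpace H']
    (L : H' →L[ℝ] H)
    (C : Set H) (hne : C.Nonempty) (hclosed : IsClosed C) (hconv : Convex ℝ C)
    (Pc : H → H)
    (hproj : ∀ x : H, Pc x ∈ C ∧ ∀ y ∈ C, ‖x - Pc x‖ ≤ ‖x - y‖)
    (S : H) (lam : ℝ) (hlam : 0 < lam)
    (d : H' → ℝ)
    (hd : d = fun p => -‖(S - lam • L p) - Pc (S - lam • L p)‖ ^ 2 + ‖S - lam • L p‖ ^ 2)
    (g : H' → H')
    (hg : g = fun p => (-(2 * lam)) • (ContinuousLinearMap.adjoint L) (Pc (S - lam • L p))) :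
    (∀ p : H', HasGradientAt d (g p) p) ∧
    (∀ p q : H', ‖g p - g q‖ ≤ 2 * lam ^ 2 * ‖L‖ ^ 2 * ‖p - q‖) := by
  -- variational inequality
  have hVI : ∀ x : H, ∀ z ∈ C, ⟪x - Pc x, z - Pc x⟫ ≤ 0 := by
    intro x
    have hmem := (hproj x).1
    haveI : Nonempty C := ⟨⟨Pc x, hmem⟩⟩
    have hinf : ‖x - Pc x‖ = ⨅ w : C, ‖x - (w : H)‖ := by
      apply le_antisymm
      · exact le_ciInf fun w => (hproj x).2 w w.2
      · exact ciInf_le ⟨0, fun b ⟨w, hw⟩ => hw ▸ norm_nonneg _⟩ (⟨Pc x, hmem⟩ : C)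
    exact (norm_eq_iInf_iff_real_inner_le_zero hconv hmem).1 hinf
  -- nonexpansiveness
  have hlip : ∀ x y : H, ‖Pc x - Pc y‖ ≤ ‖x - y‖ := by
    intro x y
    have h1 := hVI x (Pc y) (hproj y).1
    have h2 := hVI y (Pc x) (hproj x).1
    have key : ‖Pc x - Pc y‖ ^ 2 ≤ ⟪x - y, Pc x - Pc y⟫ := by
      have e1 : ⟪x - Pc x, Pc y - Pc x⟫ =
          ⟪x, Pc y⟫ - ⟪x, Pc x⟫ - ⟪Pc x, Pc y⟫ + ‖Pc x‖ ^ 2 := by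
        simp only [inner_sub_left, inner_sub_right, real_inner_self_eq_norm_sq]
        ring
      have e2 : ⟪y - Pc y, Pc x - Pc y⟫ =
          ⟪y, Pc x⟫ - ⟪y, Pc y⟫ - ⟪Pc y, Pc x⟫ + ‖Pc y‖ ^ 2 := by
        simp only [inner_sub_left, inner_sub_right, real_inner_self_eq_norm_sq]
        ring
      have e3 : ⟪x - y, Pc x - Pc y⟫ =
          ⟪x, Pc x⟫ - ⟪x, Pc y⟫ - ⟪y, Pc x⟫ + ⟪y, Pc y⟫ := by
        simp only [inner_sub_left, inner_sub_right]
        ring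
      have e4 : ‖Pc x - Pc y‖ ^ 2 = ‖Pc x‖ ^ 2 - 2 * ⟪Pc x, Pc y⟫ + ‖Pc y‖ ^ 2 :=
        norm_sub_sq_real (Pc x) (Pc y)
      have e5 : ⟪Pc y, Pc x⟫ = ⟪Pc x, Pc y⟫ := real_inner_comm _ _
      linarith
    have hcs := real_inner_le_norm (x - y) (Pc x - Pc y)
    nlinarith [norm_nonneg (Pc x - Pc y), norm_nonneg (x - y)]
  -- two-sided error bound
  have habs : ∀ x y : H,
      |(-‖y - Pc y‖ ^ 2 + ‖y‖ ^ 2) - (-‖x - Pc x‖ ^ 2 + ‖x‖ ^ 2) - 2 * ⟪Pc x, y - x⟫|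
        ≤ 2 * ‖y - x‖ ^ 2 := by
    intro x y
    have hy : ‖y - Pc y‖ ≤ ‖y - Pc x‖ := (hproj y).2 _ (hproj x).1
    have hx : ‖x - Pc x‖ ≤ ‖x - Pc y‖ := (hproj x).2 _ (hproj y).1
    have hy2 : ‖y - Pc y‖ ^ 2 ≤ ‖y - Pc x‖ ^ 2 :=
      pow_le_pow_left₀ (norm_nonneg _) hy 2
    have hx2 : ‖x - Pc x‖ ^ 2 ≤ ‖x - Pc y‖ ^ 2 :=
      pow_le_pow_left₀ (norm_nonneg _) hx 2
    have e1 : ‖y - Pc x‖ ^ 2 = ‖y‖ ^ 2 - 2 * ⟪y, Pc x⟫ + ‖Pc x‖ ^ 2 :=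
      norm_sub_sq_real y (Pc x)
    have e2 : ‖x - Pc x‖ ^ 2 = ‖x‖ ^ 2 - 2 * ⟪x, Pc x⟫ + ‖Pc x‖ ^ 2 :=
      norm_sub_sq_real x (Pc x)
    have e3 : ‖y - Pc y‖ ^ 2 = ‖y‖ ^ 2 - 2 * ⟪y, Pc y⟫ + ‖Pc y‖ ^ 2 :=
      norm_sub_sq_real y (Pc y)
    have e4 : ‖x - Pc y‖ ^ 2 = ‖x‖ ^ 2 - 2 * ⟪x, Pc y⟫ + ‖Pc y‖ ^ 2 :=
      norm_sub_sq_real x (Pc y)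
    have hinner : ⟪Pc x, y - x⟫ = ⟪y, Pc x⟫ - ⟪x, Pc x⟫ := by
      rw [inner_sub_right, real_inner_comm]
      rw [real_inner_comm (Pc x) x]
    have hupper : ⟪y - x, Pc y - Pc x⟫ ≤ ‖y - x‖ ^ 2 := by
      have h1 := real_inner_le_norm (y - x) (Pc y - Pc x)
      have h2 := hlip y x
      nlinarith [norm_nonneg (y - x), norm_nonneg (Pc y - Pc x)]
    have hupper' : ⟪y, Pc y⟫ - ⟪x, Pc y⟫ - ⟪y, Pc x⟫ + ⟪x, Pc x⟫ ≤ ‖y - x‖ ^ 2 := by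
      have : ⟪y - x, Pc y - Pc x⟫ =
          ⟪y, Pc y⟫ - ⟪x, Pc y⟫ - ⟪y, Pc x⟫ + ⟪x, Pc x⟫ := by
        simp [inner_sub_left, inner_sub_right]; ring
      linarith
    rw [abs_le]
    constructor
    · nlinarith [sq_nonneg ‖y - x‖]
    · nlinarith
  -- notation
  set u : H' → H := fun p => S - lam • L p with hu
  have hudiff : ∀ p q : H', u q - u p = (-lam) • L (q - p) := by
    intro p q
    simp only [hu, map_sub, smul_sub, neg_smul]
    abel
  have hgp_inner : ∀ p : H', ∀ h : H', ⟪g p, h⟫ = -(2 * lam) * ⟪Pc (u p), L h⟫ := by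
    intro p h
    rw [hg]
    simp only [real_inner_smul_left]
    rw [ContinuousLinearMap.adjoint_inner_left]
  have hLnorm : ∀ p q : H', ‖u q - u p‖ ≤ lam * ‖L‖ * ‖q - p‖ := by
    intro p q
    rw [hudiff p q, norm_smul]
    have := L.le_opNorm (q - p)
    simp only [norm_neg, Real.norm_eq_abs, abs_of_pos hlam]
    nlinarith [norm_nonneg (q - p)]
  constructor
  · intro p
    rw [hasGradientAt_iff_isLittleO]
    rw [Asymptotics.isLittleO_iff]
    intro ε hε
    have hc : (0:ℝ) < 2 * lam ^ 2 * ‖L‖ ^ 2 + 1 := by positivity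
    rw [Metric.eventually_nhds_iff]
    refine ⟨ε / (2 * lam ^ 2 * ‖L‖ ^ 2 + 1), by positivity, fun q hq => ?_⟩
    have hqp : ‖q - p‖ < ε / (2 * lam ^ 2 * ‖L‖ ^ 2 + 1) := by
      rw [← dist_eq_norm]; exact hq
    have herr : d q - d p - ⟪g p, q - p⟫ =
        (-‖u q - Pc (u q)‖ ^ 2 + ‖u q‖ ^ 2) - (-‖u p - Pc (u p)‖ ^ 2 + ‖u p‖ ^ 2)
          - 2 * ⟪Pc (u p), u q - u p⟫ := by
      rw [hd]
      simp only [← hu]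
      rw [hgp_inner p (q - p)]
      rw [hudiff p q]
      rw [real_inner_smul_right]
      ring
    have hb := habs (u p) (u q)
    rw [← herr] at hb
    have hb2 : ‖u q - u p‖ ^ 2 ≤ (lam * ‖L‖ * ‖q - p‖) ^ 2 := by
      apply pow_le_pow_left₀ (norm_nonneg _) (hLnorm p q)
    have : |d q - d p - ⟪g p, q - p⟫| ≤ 2 * lam ^ 2 * ‖L‖ ^ 2 * ‖q - p‖ ^ 2 := by
      nlinarith
    rw [Real.norm_eq_abs]
    calc |d q - d p - ⟪g p, q - p⟫| ≤ 2 * lam ^ 2 * ‖L‖ ^ 2 * ‖q - p‖ ^ 2 := this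
      _ ≤ ε * ‖q - p‖ := by
        have hn : (0:ℝ) ≤ ‖q - p‖ := norm_nonneg _
        have h1 : (2 * lam ^ 2 * ‖L‖ ^ 2) * ‖q - p‖ ≤ ε := by
          calc (2 * lam ^ 2 * ‖L‖ ^ 2) * ‖q - p‖
              ≤ (2 * lam ^ 2 * ‖L‖ ^ 2 + 1) * ‖q - p‖ := by nlinarith
            _ ≤ (2 * lam ^ 2 * ‖L‖ ^ 2 + 1) * (ε / (2 * lam ^ 2 * ‖L‖ ^ 2 + 1)) := by
                apply mul_le_mul_of_nonneg_left (le_of_lt hqp) (le_of_lt hc)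
            _ = ε := by field_simp
        nlinarith
  · intro p q
    rw [hg]
    simp only
    rw [← smul_sub, norm_smul, ← map_sub]
    have h1 : ‖(ContinuousLinearMap.adjoint L) (Pc (u p) - Pc (u q))‖
        ≤ ‖L‖ * ‖Pc (u p) - Pc (u q)‖ := by
      have := (ContinuousLinearMap.adjoint L).le_opNorm (Pc (u p) - Pc (u q))
      rwa [ContinuousLinearMap.adjoint.norm_map L] at this
    have h2 : ‖Pc (u p) - Pc (u q)‖ ≤ ‖u p - u q‖ := hlip _ _
    have h3 : ‖u p - u q‖ ≤ lam * ‖L‖ * ‖p - q‖ := hLnorm q p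
    simp only [Real.norm_eq_abs, abs_neg, abs_of_pos (by positivity : (0:ℝ) < 2 * lam)]
    have hL0 : (0:ℝ) ≤ ‖L‖ := norm_nonneg _
    have hup : S - lam • L p = u p := rfl
    have huq : S - lam • L q = u q := rfl
    rw [hup, huq]
    have c1 : (0:ℝ) ≤ 2 * lam := by positivity
    calc 2 * lam * ‖(ContinuousLinearMap.adjoint L) (Pc (u p) - Pc (u q))‖
        ≤ 2 * lam * (‖L‖ * ‖Pc (u p) - Pc (u q)‖) := mul_le_mul_of_nonneg_left h1 c1
      _ ≤ 2 * lam * (‖L‖ * ‖u p - u q‖) :=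
          mul_le_mul_of_nonneg_left (mul_le_mul_of_nonneg_left h2 hL0) c1
      _ ≤ 2 * lam * (‖L‖ * (lam * ‖L‖ * ‖p - q‖)) :=
          mul_le_mul_of_nonneg_left (mul_le_mul_of_nonneg_left h3 hL0) c1
      _ = 2 * lam ^ 2 * ‖L‖ ^ 2 * ‖p - q‖ := by ring
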